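/- arXiv:2602.00413 — 2 statements merged into one kernel-verified Lean document; each statement's English description precedes it below -/
import Mathlib

section
/- Let x ∈ ℝ^d with pₜ(x) > 0, and assume E(x) := ∫ p_{1|t}(x₁ | x) exp(r(x₁)/β) dx₁ is finite and positive. Then qₜ(x) = pₜ(x) E(x) / Z > 0, and the marginal velocity of the reward-weighted model decomposes as v_q(x) = v_p(x) + ∫ p_{1|t}(x₁ | x) (R(x₁, x) − 1) u(x, x₁) dx₁, where R(x₁, x) := exp(r(x₁)/β) / E(x). That is, the aligned velocity field equals the pre-trained velocity field plus a reward-driven velocity guidance term given by the posterior expectation of (R − 1) times the conditional velocity. -/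
open MeasureTheory Filter

noncomputable section

/-- `Vec d` is `ℝ^d`, equipped with Lebesgue measure. -/
abbrev Vec (d : ℕ) := EuclideanSpace ℝ (Fin d)

variable {d : ℕ}

/-- The marginal `pₜ(x) = ∫ κ(x | x₁) p₁(x₁) dx₁`. -/
def pT (κ : Vec d → Vec d → ℝ) (p₁ : Vec d → ℝ) (x : Vec d) : ℝ :=
  ∫ x₁, κ x x₁ * p₁ x₁

/-- The posterior `p_{1|t}(x₁ | x) = κ(x | x₁) p₁(x₁) / pₜ(x)`. -/
def post (κ : Vec d → Vec d → ℝ) (p₁ : Vec d → ℝ) (x x₁ : Vec d) : ℝ :=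
  κ x x₁ * p₁ x₁ / pT κ p₁ x

/-- The normalizing constant `Z = ∫ p₁(x₁) exp(r(x₁)/β) dx₁`. -/
def Zconst (p₁ r : Vec d → ℝ) (β : ℝ) : ℝ :=
  ∫ x₁, p₁ x₁ * Real.exp (r x₁ / β)

/-- The reward-weighted data density `q₁(x₁) = p₁(x₁) exp(r(x₁)/β) / Z`. -/
def q1 (p₁ r : Vec d → ℝ) (β : ℝ) (x₁ : Vec d) : ℝ :=
  p₁ x₁ * Real.exp (r x₁ / β) / Zconst p₁ r β

/-- The tilted marginal `qₜ(x) = ∫ κ(x | x₁) q₁(x₁) dx₁`. -/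
def qT (κ : Vec d → Vec d → ℝ) (p₁ r : Vec d → ℝ) (β : ℝ) (x : Vec d) : ℝ :=
  ∫ x₁, κ x x₁ * q1 p₁ r β x₁

/-- The tilted posterior `q_{1|t}(x₁ | x) = κ(x | x₁) q₁(x₁) / qₜ(x)`. -/
def qPost (κ : Vec d → Vec d → ℝ) (p₁ r : Vec d → ℝ) (β : ℝ) (x x₁ : Vec d) : ℝ :=
  κ x x₁ * q1 p₁ r β x₁ / qT κ p₁ r β x

/-- The posterior expectation `E(x) = ∫ p_{1|t}(x₁ | x) exp(r(x₁)/β) dx₁`. -/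
def Efun (κ : Vec d → Vec d → ℝ) (p₁ r : Vec d → ℝ) (β : ℝ) (x : Vec d) : ℝ :=
  ∫ x₁, post κ p₁ x x₁ * Real.exp (r x₁ / β)

/-- The marginal velocity `v_p(x) = ∫ p_{1|t}(x₁ | x) u(x, x₁) dx₁` of the reference model. -/
def vP (κ : Vec d → Vec d → ℝ) (p₁ : Vec d → ℝ) (u : Vec d → Vec d → Vec d)
    (x : Vec d) : Vec d :=
  ∫ x₁, post κ p₁ x x₁ • u x x₁

/-- The marginal velocity `v_q(x) = ∫ q_{1|t}(x₁ | x) u(x, x₁) dx₁` of the tilted model. -/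
def vQ (κ : Vec d → Vec d → ℝ) (p₁ r : Vec d → ℝ) (β : ℝ) (u : Vec d → Vec d → Vec d)
    (x : Vec d) : Vec d :=
  ∫ x₁, qPost κ p₁ r β x x₁ • u x x₁

/-! The tilted posterior is the reference posterior reweighted by `R(x₁, x) = exp(r(x₁)/β) / E(x)`:
both `qₜ(x)` and `q_{1|t}(x₁ | x)` are governed by the single integral `∫ κ(x | x₁) p₁(x₁) exp(r(x₁)/β) dx₁
= pₜ(x) E(x)`, the constant `Z` cancels, and the decomposition of `v_q` is linearity of the integral
applied to `R = 1 + (R - 1)`. The integrability this needs is free: a nonzero Bochner integral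
forces its integrand to be integrable, so `pₜ(x) > 0` and `E(x) > 0` supply it. -/

theorem integral_mul_smul_eq_add_integral_mul_sub_one_smul {α E : Type*} [MeasurableSpace α]
    {μ : Measure α} [NormedAddCommGroup E] [NormedSpace ℝ E] {w R : α → ℝ} {v : α → E}
    (hw : Integrable (fun a => w a • v a) μ) (hwR : Integrable (fun a => (w a * R a) • v a) μ) :
    ∫ a, (w a * R a) • v a ∂μ = ∫ a, w a • v a ∂μ + ∫ a, (w a * (R a - 1)) • v a ∂μ := by
  have hsplit : ∀ a, (w a * (R a - 1)) • v a = (w a * R a) • v a - w a • v a := fun a => by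
    rw [← sub_smul, mul_sub_one]
  simp_rw [hsplit]
  rw [integral_sub hwR hw]
  abel

section TiltedPosterior

variable {d : ℕ} {κ : Vec d → Vec d → ℝ} {p₁ r : Vec d → ℝ} {β : ℝ} {x : Vec d}

theorem integrable_post (hpt : 0 < pT κ p₁ x) : Integrable (post κ p₁ x) :=
  (Integrable.of_integral_ne_zero hpt.ne').div_const _

theorem Efun_eq_integral_div_pT :
    Efun κ p₁ r β x = (∫ x₁, κ x x₁ * p₁ x₁ * Real.exp (r x₁ / β)) / pT κ p₁ x := by
  simp_rw [Efun, post, div_mul_eq_mul_div]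
  exact integral_div _ _

theorem qT_eq_integral_div_Zconst :
    qT κ p₁ r β x = (∫ x₁, κ x x₁ * p₁ x₁ * Real.exp (r x₁ / β)) / Zconst p₁ r β := by
  simp_rw [qT, q1, mul_div_assoc', ← mul_assoc]
  exact integral_div _ _

theorem qT_eq_pT_mul_Efun_div_Zconst (hpt : pT κ p₁ x ≠ 0) :
    qT κ p₁ r β x = pT κ p₁ x * Efun κ p₁ r β x / Zconst p₁ r β := by
  rw [qT_eq_integral_div_Zconst, Efun_eq_integral_div_pT, mul_div_cancel₀ _ hpt]

theorem qPost_eq_post_mul (hpt : pT κ p₁ x ≠ 0) (hZ : Zconst p₁ r β ≠ 0)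
    (hE : Efun κ p₁ r β x ≠ 0) (x₁ : Vec d) :
    qPost κ p₁ r β x x₁ = post κ p₁ x x₁ * (Real.exp (r x₁ / β) / Efun κ p₁ r β x) := by
  rw [qPost, qT_eq_pT_mul_Efun_div_Zconst hpt, q1, post]
  field_simp

end TiltedPosterior

theorem reward_weighted_velocity_decomposition_general
    (d : ℕ)
    -- `p₁` is a probability density
    (p₁ : Vec d → ℝ)
    -- `κ` is a conditional kernel: nonnegative, measurable, a density in its first argument
    (κ : Vec d → Vec d → ℝ)
    -- `u` is a measurable bounded conditional velocity field
    (u : Vec d → Vec d → Vec d) (hu_meas : Measurable (Function.uncurry u))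
    (hu_bdd : ∃ C, ∀ x x₁, ‖u x x₁‖ ≤ C)
    -- reward `r`, `β > 0`, and `Z` finite and positive
    (r : Vec d → ℝ) (β : ℝ)
    (hZ_pos : 0 < Zconst p₁ r β)
    -- the point `x`, with `pₜ(x) > 0` and `E(x)` finite and positive
    (x : Vec d) (hpt_pos : 0 < pT κ p₁ x)
    (hE_pos : 0 < Efun κ p₁ r β x) :
    -- `qₜ(x) = pₜ(x) E(x) / Z > 0`
    qT κ p₁ r β x = pT κ p₁ x * Efun κ p₁ r β x / Zconst p₁ r β ∧
    0 < qT κ p₁ r β x ∧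
    -- velocity decomposition with `R(x₁, x) = exp(r(x₁)/β) / E(x)`
    vQ κ p₁ r β u x
      = vP κ p₁ u x
        + ∫ x₁, (post κ p₁ x x₁
            * (Real.exp (r x₁ / β) / Efun κ p₁ r β x - 1)) • u x x₁ := by
  obtain ⟨C, hC⟩ := hu_bdd
  have hu_x : AEStronglyMeasurable (u x) volume :=
    (hu_meas.comp measurable_prodMk_left).aestronglyMeasurable
  have hpostR :
      Integrable (fun x₁ => post κ p₁ x x₁ * (Real.exp (r x₁ / β) / Efun κ p₁ r β x)) := by
    simp_rw [← mul_div_assoc]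
    exact (Integrable.of_integral_ne_zero hE_pos.ne').div_const _
  have hqT := qT_eq_pT_mul_Efun_div_Zconst (r := r) (β := β) hpt_pos.ne'
  refine ⟨hqT, by rw [hqT]; positivity, ?_⟩
  simp_rw [vQ, vP, qPost_eq_post_mul hpt_pos.ne' hZ_pos.ne' hE_pos.ne']
  exact integral_mul_smul_eq_add_integral_mul_sub_one_smul
    ((integrable_post hpt_pos).smul_bdd C hu_x (.of_forall (hC x)))
    (hpostR.smul_bdd C hu_x (.of_forall (hC x)))

/-- The aligned (reward-weighted) marginal velocity equals the pre-trained
velocity plus the posterior expectation of `(R − 1)` times the conditional velocity. -/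
theorem reward_weighted_velocity_decomposition
    (d : ℕ) (hd : 1 ≤ d)
    -- `p₁` is a probability density
    (p₁ : Vec d → ℝ) (hp₁_meas : Measurable p₁) (hp₁_nonneg : ∀ x₁, 0 ≤ p₁ x₁)
    (hp₁_int : ∫ x₁, p₁ x₁ = 1)
    -- `κ` is a conditional kernel: nonnegative, measurable, a density in its first argument
    (κ : Vec d → Vec d → ℝ) (hκ_meas : Measurable (Function.uncurry κ))
    (hκ_nonneg : ∀ x x₁, 0 ≤ κ x x₁) (hκ_dens : ∀ x₁, ∫ x, κ x x₁ = 1)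
    -- `u` is a measurable bounded conditional velocity field
    (u : Vec d → Vec d → Vec d) (hu_meas : Measurable (Function.uncurry u))
    (hu_bdd : ∃ C, ∀ x x₁, ‖u x x₁‖ ≤ C)
    -- reward `r`, `β > 0`, and `Z` finite and positive
    (r : Vec d → ℝ) (hr_meas : Measurable r) (β : ℝ) (hβ : 0 < β)
    (hZ_int : Integrable (fun x₁ => p₁ x₁ * Real.exp (r x₁ / β)))
    (hZ_pos : 0 < Zconst p₁ r β)
    -- the point `x`, with `pₜ(x) > 0` and `E(x)` finite and positive
    (x : Vec d) (hpt_pos : 0 < pT κ p₁ x)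
    (hE_int : Integrable (fun x₁ => post κ p₁ x x₁ * Real.exp (r x₁ / β)))
    (hE_pos : 0 < Efun κ p₁ r β x) :
    -- `qₜ(x) = pₜ(x) E(x) / Z > 0`
    qT κ p₁ r β x = pT κ p₁ x * Efun κ p₁ r β x / Zconst p₁ r β ∧
    0 < qT κ p₁ r β x ∧
    -- velocity decomposition with `R(x₁, x) = exp(r(x₁)/β) / E(x)`
    vQ κ p₁ r β u x
      = vP κ p₁ u x
        + ∫ x₁, (post κ p₁ x x₁
            * (Real.exp (r x₁ / β) / Efun κ p₁ r β x - 1)) • u x x₁ :=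
  reward_weighted_velocity_decomposition_general d p₁ κ u hu_meas hu_bdd r β hZ_pos x hpt_pos hE_pos

end
end

section
/- Let x ∈ ℝ^d with pₜ(x) > 0, and assume N(x) := ∫ p₁(x₁) exp(r(x₁)/β) κ(x | x₁) dx₁ is finite and positive. Define the importance weight ω(x₁) := κ(x | x₁)/pₜ(x) and D(x) := ∫ p₁(x₁) exp(r(x₁)/β) ω(x₁) dx₁ (so D(x) = N(x)/pₜ(x)). Then the velocity guidance term is expressible as an expectation under the marginal data density: v_q(x) − v_p(x) = ∫ p₁(x₁) ( exp(r(x₁)/β)/D(x) − 1 ) u(x, x₁) ω(x₁) dx₁. In particular the guidance term can be computed by sampling from p₁ alone, without sampling from the posterior p_{1|t}(· | x). -/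
open MeasureTheory Filter

noncomputable section

variable {d : ℕ}

/-- The importance weight `ω(x₁) = κ(x | x₁) / pₜ(x)`. -/
def omegaW (κ : Vec d → Vec d → ℝ) (p₁ : Vec d → ℝ) (x x₁ : Vec d) : ℝ :=
  κ x x₁ / pT κ p₁ x

/-- `N(x) = ∫ p₁(x₁) exp(r(x₁)/β) κ(x | x₁) dx₁`. -/
def Nfun (κ : Vec d → Vec d → ℝ) (p₁ r : Vec d → ℝ) (β : ℝ) (x : Vec d) : ℝ :=
  ∫ x₁, p₁ x₁ * Real.exp (r x₁ / β) * κ x x₁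

/-- `D(x) = ∫ p₁(x₁) exp(r(x₁)/β) ω(x₁) dx₁`. -/
def Dfun (κ : Vec d → Vec d → ℝ) (p₁ r : Vec d → ℝ) (β : ℝ) (x : Vec d) : ℝ :=
  ∫ x₁, p₁ x₁ * Real.exp (r x₁ / β) * omegaW κ p₁ x x₁

/-!
Both posteriors reweight the same joint density `κ(x | x₁) p₁(x₁)`: `p_{1|t} = p₁ ω` and, since
the constant `Z` cancels from `q₁` and `qₜ`, `q_{1|t} = p₁ exp(r/β) κ / N = p₁ exp(r/β) ω / D`.
The guidance term `v_q − v_p` is therefore `∫ p₁ (exp(r/β)/D − 1) ω u`, and this integral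
splits into the two posterior means because `κ p₁` and `p₁ exp(r/β) κ` are integrable and `u`
is bounded.
-/

section

variable (κ : Vec d → Vec d → ℝ) (p₁ r : Vec d → ℝ) (β : ℝ) (u : Vec d → Vec d → Vec d)
  (x : Vec d)

theorem Dfun_eq_Nfun_div_pT : Dfun κ p₁ r β x = Nfun κ p₁ r β x / pT κ p₁ x := by
  simp_rw [Dfun, Nfun, omegaW, ← mul_div_assoc, integral_div]

theorem qT_eq_Nfun_div_Zconst : qT κ p₁ r β x = Nfun κ p₁ r β x / Zconst p₁ r β := by
  rw [qT, Nfun, ← integral_div]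
  congr 1 with x₁
  rw [q1]
  ring

theorem qPost_eq_inv_Nfun_mul (hZ : Zconst p₁ r β ≠ 0) (x₁ : Vec d) :
    qPost κ p₁ r β x x₁ = (Nfun κ p₁ r β x)⁻¹ * (p₁ x₁ * Real.exp (r x₁ / β) * κ x x₁) := by
  rw [qPost, q1, qT_eq_Nfun_div_Zconst]
  field_simp

theorem vQ_eq_inv_Nfun_smul_integral (hZ : Zconst p₁ r β ≠ 0) :
    vQ κ p₁ r β u x
      = (Nfun κ p₁ r β x)⁻¹ • ∫ x₁, (p₁ x₁ * Real.exp (r x₁ / β) * κ x x₁) • u x x₁ := by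
  simp_rw [vQ, qPost_eq_inv_Nfun_mul κ p₁ r β x hZ, mul_smul]
  exact integral_smul _ _

theorem vP_eq_inv_pT_smul_integral :
    vP κ p₁ u x = (pT κ p₁ x)⁻¹ • ∫ x₁, (κ x x₁ * p₁ x₁) • u x x₁ := by
  simp_rw [vP, post, div_eq_inv_mul, mul_smul]
  exact integral_smul _ _

theorem guidance_weight_eq (hpT : pT κ p₁ x ≠ 0) (x₁ : Vec d) :
    p₁ x₁ * (Real.exp (r x₁ / β) / Dfun κ p₁ r β x - 1) * omegaW κ p₁ x x₁
      = (Nfun κ p₁ r β x)⁻¹ * (p₁ x₁ * Real.exp (r x₁ / β) * κ x x₁)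
        - (pT κ p₁ x)⁻¹ * (κ x x₁ * p₁ x₁) := by
  rw [Dfun_eq_Nfun_div_pT, omegaW, div_div_eq_mul_div]
  field_simp

end

theorem velocity_guidance_as_marginal_expectation_general
    (d : ℕ)
    (p₁ : Vec d → ℝ)
    (κ : Vec d → Vec d → ℝ)
    -- `u` is a measurable bounded conditional velocity field
    (u : Vec d → Vec d → Vec d) (hu_meas : Measurable (Function.uncurry u))
    (hu_bdd : ∃ C, ∀ x x₁, ‖u x x₁‖ ≤ C)
    (r : Vec d → ℝ) (β : ℝ)
    (hZ_pos : 0 < Zconst p₁ r β)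
    (x : Vec d) (hpt_pos : 0 < pT κ p₁ x)
    (hN_int : Integrable (fun x₁ => p₁ x₁ * Real.exp (r x₁ / β) * κ x x₁)) :
    -- `D(x) = N(x) / pₜ(x)`
    Dfun κ p₁ r β x = Nfun κ p₁ r β x / pT κ p₁ x ∧
    -- the guidance term as an expectation under `p₁`
    vQ κ p₁ r β u x - vP κ p₁ u x
      = ∫ x₁, (p₁ x₁ * (Real.exp (r x₁ / β) / Dfun κ p₁ r β x - 1)
          * omegaW κ p₁ x x₁) • u x x₁ := by
  obtain ⟨C, hC⟩ := hu_bdd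
  have hu_le : ∀ᵐ x₁, ‖u x x₁‖ ≤ C := ae_of_all _ (hC x)
  have hu : AEStronglyMeasurable (u x) :=
    (hu_meas.comp measurable_prodMk_left).aestronglyMeasurable
  have hκp : Integrable (fun x₁ => κ x x₁ * p₁ x₁) := Integrable.of_integral_ne_zero hpt_pos.ne'
  refine ⟨Dfun_eq_Nfun_div_pT κ p₁ r β x, ?_⟩
  simp_rw [guidance_weight_eq κ p₁ r β x hpt_pos.ne', sub_smul,
    mul_smul (Nfun κ p₁ r β x)⁻¹, mul_smul (pT κ p₁ x)⁻¹]
  rw [integral_sub, integral_smul, integral_smul, vQ_eq_inv_Nfun_smul_integral κ p₁ r β u x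
    hZ_pos.ne', vP_eq_inv_pT_smul_integral]
  · exact (hN_int.smul_bdd C hu hu_le).smul (Nfun κ p₁ r β x)⁻¹
  · exact (hκp.smul_bdd C hu hu_le).smul (pT κ p₁ x)⁻¹

/-- The velocity guidance term is expressible as an expectation under the
marginal data density `p₁`, without sampling from the posterior. -/
theorem velocity_guidance_as_marginal_expectation
    (d : ℕ) (hd : 1 ≤ d)
    -- `p₁` is a probability density
    (p₁ : Vec d → ℝ) (hp₁_meas : Measurable p₁) (hp₁_nonneg : ∀ x₁, 0 ≤ p₁ x₁)
    (hp₁_int : ∫ x₁, p₁ x₁ = 1)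
    -- `κ` is a conditional kernel: nonnegative, measurable, a density in its first argument
    (κ : Vec d → Vec d → ℝ) (hκ_meas : Measurable (Function.uncurry κ))
    (hκ_nonneg : ∀ x x₁, 0 ≤ κ x x₁) (hκ_dens : ∀ x₁, ∫ x, κ x x₁ = 1)
    -- `u` is a measurable bounded conditional velocity field
    (u : Vec d → Vec d → Vec d) (hu_meas : Measurable (Function.uncurry u))
    (hu_bdd : ∃ C, ∀ x x₁, ‖u x x₁‖ ≤ C)
    -- reward `r`, `β > 0`, and `Z` finite and positive
    (r : Vec d → ℝ) (hr_meas : Measurable r) (β : ℝ) (hβ : 0 < β)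
    (hZ_int : Integrable (fun x₁ => p₁ x₁ * Real.exp (r x₁ / β)))
    (hZ_pos : 0 < Zconst p₁ r β)
    -- the point `x`, with `pₜ(x) > 0` and `N(x)` finite and positive
    (x : Vec d) (hpt_pos : 0 < pT κ p₁ x)
    (hN_int : Integrable (fun x₁ => p₁ x₁ * Real.exp (r x₁ / β) * κ x x₁))
    (hN_pos : 0 < Nfun κ p₁ r β x) :
    -- `D(x) = N(x) / pₜ(x)`
    Dfun κ p₁ r β x = Nfun κ p₁ r β x / pT κ p₁ x ∧
    -- the guidance term as an expectation under `p₁`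
    vQ κ p₁ r β u x - vP κ p₁ u x
      = ∫ x₁, (p₁ x₁ * (Real.exp (r x₁ / β) / Dfun κ p₁ r β x - 1)
          * omegaW κ p₁ x x₁) • u x x₁ :=
  velocity_guidance_as_marginal_expectation_general d p₁ κ u hu_meas hu_bdd r β hZ_pos x hpt_pos
    hN_int

end
end
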